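/- With the five measurement vectors y⃗₁ = (1,−1,1), y⃗₂ = (1,−1,0), y⃗₃ = (1,0,−1), y⃗₄ = (1,2,−1), y⃗₅ = (1,2,2), the quantity Σ_{j=1}^{5} ‖y⃗ⱼ‖₂ = 3 + 2√2 + √3 + √6 is strictly greater than 10. -/
import Mathlib

/-- The five measurement Bloch vectors of the witness `W_{6,5,2}`. -/
noncomputable def yvecs : Fin 5 → EuclideanSpace ℝ (Fin 3) := fun j =>
  (WithLp.equiv 2 (Fin 3 → ℝ)).symm
    (![![1,-1,1], ![1,-1,0], ![1,0,-1], ![1,2,-1], ![1,2,2]] j)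

lemma norm_eq (j : Fin 5) (r : ℝ) (hr : 0 ≤ r)
    (h : (yvecs j 0)^2 + (yvecs j 1)^2 + (yvecs j 2)^2 = r^2) : ‖yvecs j‖ = r := by
  rw [EuclideanSpace.norm_eq]
  rw [show ∑ i, ‖yvecs j i‖^2 = r^2 by
    rw [Fin.sum_univ_three]; simpa [Real.norm_eq_abs, sq_abs] using h]
  exact Real.sqrt_sq hr

theorem qubit_value_exceeds_trit_bound :
    (∑ j, ‖yvecs j‖) = 3 + 2*Real.sqrt 2 + Real.sqrt 3 + Real.sqrt 6 ∧
    10 < 3 + 2*Real.sqrt 2 + Real.sqrt 3 + Real.sqrt 6 := by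
  have h0 : ‖yvecs 0‖ = Real.sqrt 3 := norm_eq 0 _ (Real.sqrt_nonneg _)
    (by simp [yvecs, Real.sq_sqrt]; norm_num)
  have h1 : ‖yvecs 1‖ = Real.sqrt 2 := norm_eq 1 _ (Real.sqrt_nonneg _)
    (by simp [yvecs, Real.sq_sqrt]; norm_num)
  have h2 : ‖yvecs 2‖ = Real.sqrt 2 := norm_eq 2 _ (Real.sqrt_nonneg _)
    (by simp [yvecs, Real.sq_sqrt]; norm_num)
  have h3 : ‖yvecs 3‖ = Real.sqrt 6 := norm_eq 3 _ (Real.sqrt_nonneg _)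
    (by simp [yvecs, Real.sq_sqrt]; norm_num)
  have h4 : ‖yvecs 4‖ = 3 := norm_eq 4 _ (by norm_num) (by simp [yvecs]; norm_num)
  constructor
  · rw [Fin.sum_univ_five, h0, h1, h2, h3, h4]; ring
  · have a2 : (1.414:ℝ) < Real.sqrt 2 := by
      rw [show (1.414:ℝ) = Real.sqrt (1.414^2) by rw [Real.sqrt_sq]; norm_num]
      exact Real.sqrt_lt_sqrt (by norm_num) (by norm_num)
    have a3 : (1.732:ℝ) < Real.sqrt 3 := by
      rw [show (1.732:ℝ) = Real.sqrt (1.732^2) by rw [Real.sqrt_sq]; norm_num]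
      exact Real.sqrt_lt_sqrt (by norm_num) (by norm_num)
    have a6 : (2.449:ℝ) < Real.sqrt 6 := by
      rw [show (2.449:ℝ) = Real.sqrt (2.449^2) by rw [Real.sqrt_sq]; norm_num]
      exact Real.sqrt_lt_sqrt (by norm_num) (by norm_num)
    nlinarith
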